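/- Replacing ν_ρ^n by the modified gauge ν̃_ρ^n, in which each covering interval I contributes (Leb(I)/2^n)^ρ · |log₂(Leb(I)/2^n)|^{1−ρ}, yields the same macroscopic Hausdorff dimension: for every E ⊆ ℝ₊, inf{ ρ ≥ 0 : Σ_n ν̃_ρ^n(E) < ∞ } = inf{ ρ ≥ 0 : Σ_n ν_ρ^n(E) < ∞ }. -/

import Mathlib

open MeasureTheory Filter Set

noncomputable section

/-- The annuli `S_0 = [0,1)`, `S_n = [2^{n-1}, 2^n)` for `n ≥ 1`. -/
def Sann (n : ℕ) : Set ℝ := if n = 0 then Ico (0:ℝ) 1 else Ico ((2:ℝ)^(n-1)) ((2:ℝ)^n)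

/-- achievable covering values with summand `g (length)` -/
def covVals (E : Set ℝ) (n : ℕ) (g : ℝ → ℝ) : Set ℝ :=
  { x : ℝ | ∃ (m : ℕ) (a b : Fin m → ℤ), 0 < m ∧ (∀ i, a i < b i) ∧
    (∀ i, Ico ((a i : ℝ)) ((b i : ℝ)) ⊆ Sann n) ∧
    (E ∩ Sann n ⊆ ⋃ i, Ico ((a i : ℝ)) ((b i : ℝ))) ∧
    x = ∑ i, g (((b i : ℝ)) - ((a i : ℝ))) }

lemma Sann_eq (n : ℕ) : Sann n = Ico ((2:ℝ)^(n-1) - (if n = 0 then 1 else 0)) ((2:ℝ)^n) := by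
  unfold Sann; split <;> simp_all

lemma single_mem (E : Set ℝ) (n : ℕ) (g : ℝ → ℝ) :
    (if n = 0 then g 1 else g ((2:ℝ)^(n-1))) ∈ covVals E n g := by
  by_cases h : n = 0
  · subst h
    refine ⟨1, fun _ => 0, fun _ => 1, one_pos, fun _ => by norm_num, fun i => by
      simp [Sann], fun x hx => ?_, by simp⟩
    · refine mem_iUnion.2 ⟨0, ?_⟩; simpa [Sann] using hx.2
  · refine ⟨1, fun _ => 2^(n-1), fun _ => 2^n, one_pos, fun _ => ?_, fun i => ?_, fun x hx => ?_, ?_⟩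
    · exact pow_lt_pow_right₀ one_lt_two (Nat.sub_lt (Nat.pos_of_ne_zero h) one_pos)
    · intro y hy; simp only [Sann, if_neg h]; push_cast at hy ⊢; exact hy
    · refine mem_iUnion.2 ⟨0, ?_⟩
      simp only [Sann, if_neg h] at hx; push_cast; exact hx.2
    · have h2 : (2:ℝ)^n = 2^(n-1) + 2^(n-1) := by
        rw [← two_mul, ← pow_succ']; congr 1; omega
      simp only [if_neg h, Fin.sum_univ_one]
      push_cast
      congr 1; linarith

lemma covVals_nonempty (E : Set ℝ) (n : ℕ) (g : ℝ → ℝ) : (covVals E n g).Nonempty :=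
  ⟨_, single_mem E n g⟩


/-- length bounds inside covering data -/
lemma length_bounds {n : ℕ} {a b : ℤ} (hab : a < b)
    (hsub : Ico ((a:ℝ)) ((b:ℝ)) ⊆ Sann n) :
    1 ≤ (b:ℝ) - a ∧ (b:ℝ) - a ≤ 2^(n-1) := by
  have h1 : (1:ℝ) ≤ (b:ℝ) - a := by
    have : (a:ℤ) + 1 ≤ b := hab
    have h2 : ((a:ℝ)) + 1 ≤ b := by exact_mod_cast this
    linarith
  refine ⟨h1, ?_⟩
  rw [Sann_eq] at hsub
  have hab' : (a:ℝ) < b := by exact_mod_cast hab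
  obtain ⟨hl, hr⟩ := (Ico_subset_Ico_iff hab').1 hsub
  by_cases h : n = 0
  · subst h
    norm_num at hl ⊢
    have : (0:ℝ) ≤ a := by exact_mod_cast hl
    linarith
  · simp only [if_neg h] at hl
    have : (2:ℝ)^(n-1) + 2^(n-1) = 2^n := by
      rw [← two_mul, ← pow_succ']
      congr 1
      omega
    linarith

lemma covVals_nonneg (E : Set ℝ) (n : ℕ) {g : ℝ → ℝ} (hg : ∀ L, 1 ≤ L → 0 ≤ g L) :
    ∀ x ∈ covVals E n g, 0 ≤ x := by
  rintro x ⟨m, a, b, -, hab, hsub, -, rfl⟩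
  exact Finset.sum_nonneg fun i _ => hg _ (length_bounds (hab i) (hsub i)).1

lemma covVals_bddBelow (E : Set ℝ) (n : ℕ) {g : ℝ → ℝ} (hg : ∀ L, 1 ≤ L → 0 ≤ g L) :
    BddBelow (covVals E n g) := ⟨0, fun x hx => covVals_nonneg E n hg x hx⟩

lemma sInf_le_mul_sInf (E : Set ℝ) (n : ℕ) {g₁ g₂ : ℝ → ℝ} {C : ℝ} (hC : 0 < C)
    (hg₁ : ∀ L, 1 ≤ L → 0 ≤ g₁ L)
    (h : ∀ L : ℝ, 1 ≤ L → L ≤ 2^(n-1) → g₁ L ≤ C * g₂ L) :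
    sInf (covVals E n g₁) ≤ C * sInf (covVals E n g₂) := by
  have key : sInf (covVals E n g₁) / C ≤ sInf (covVals E n g₂) := by
    apply le_csInf (covVals_nonempty _ _ _)
    rintro t ⟨m, a, b, hm, hab, hsub, hcov, rfl⟩
    have hmem : (∑ i, g₁ (((b i : ℝ)) - a i)) ∈ covVals E n g₁ :=
      ⟨m, a, b, hm, hab, hsub, hcov, rfl⟩
    have h1 : sInf (covVals E n g₁) ≤ ∑ i, g₁ (((b i : ℝ)) - a i) :=
      csInf_le (covVals_bddBelow E n hg₁) hmem
    have h2 : (∑ i, g₁ (((b i : ℝ)) - a i)) ≤ C * ∑ i, g₂ (((b i : ℝ)) - a i) := by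
      rw [Finset.mul_sum]
      refine Finset.sum_le_sum fun i _ => ?_
      obtain ⟨hL1, hL2⟩ := length_bounds (hab i) (hsub i)
      exact h _ hL1 hL2
    rw [div_le_iff₀ hC]; nlinarith
  rw [div_le_iff₀ hC] at key; linarith

lemma unit_mem (E : Set ℝ) (n : ℕ) (g : ℝ → ℝ) (hn : n ≠ 0) :
    ((2^(n-1) : ℕ) : ℝ) * g 1 ∈ covVals E n g := by
  have h2 : (2:ℝ)^(n-1) + 2^(n-1) = 2^n := by
    rw [← two_mul, ← pow_succ']; congr 1; omega
  refine ⟨2^(n-1), fun i => 2^(n-1) + i, fun i => 2^(n-1) + i + 1,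
    Nat.pow_pos two_pos, fun i => lt_add_one _, fun i => ?_, fun x hx => ?_, ?_⟩
  · have hi : (i : ℕ) < 2^(n-1) := i.isLt
    simp only [Sann, if_neg hn]
    apply Ico_subset_Ico
    · push_cast
      have : (0:ℝ) ≤ ((i:ℕ):ℝ) := Nat.cast_nonneg _
      linarith
    · push_cast
      have : ((i:ℕ) : ℝ) + 1 ≤ 2^(n-1) := by exact_mod_cast Nat.succ_le_of_lt hi
      linarith
  · simp only [Sann, if_neg hn, mem_inter_iff, mem_Ico] at hx
    obtain ⟨-, hx1, hx2⟩ := hx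
    set k : ℤ := ⌊x⌋ with hk
    have hk1 : (2:ℤ)^(n-1) ≤ k := by
      rw [hk]; apply Int.le_floor.2; push_cast; exact hx1
    have hk2 : k < 2^n := by
      rw [hk]; apply Int.floor_lt.2; push_cast; exact hx2
    have hj : (k - 2^(n-1)).toNat < 2^(n-1) := by
      have h2' : (2:ℤ)^(n-1) + 2^(n-1) = 2^n := by
        rw [← two_mul, ← pow_succ']; congr 1; omega
      have : (2:ℤ)^(n-1) = ((2^(n-1) : ℕ) : ℤ) := by push_cast; ring
      omega
    refine mem_iUnion.2 ⟨⟨(k - 2^(n-1)).toNat, hj⟩, ?_⟩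
    have hak : ((2:ℤ)^(n-1) + ((k - 2^(n-1)).toNat : ℤ)) = k := by omega
    constructor
    · push_cast [hak]; exact Int.floor_le x
    · push_cast [hak]
      have := Int.lt_floor_add_one x
      push_cast at this ⊢
      linarith
  · have hlen : ∀ i : Fin (2^(n-1)), ((((2:ℤ)^(n-1) + (i:ℤ) + 1 : ℤ)):ℝ) - ((((2:ℤ)^(n-1) + (i:ℤ) : ℤ)):ℝ) = 1 :=
      fun i => by push_cast; ring
    simp only [hlen]
    simp [Finset.sum_const, Finset.card_univ, nsmul_eq_mul]

lemma sInf_le_unit (E : Set ℝ) (n : ℕ) {g : ℝ → ℝ} (hg : ∀ L, 1 ≤ L → 0 ≤ g L) :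
    sInf (covVals E n g) ≤ 2^(n-1) * g 1 := by
  by_cases hn : n = 0
  · subst hn
    have := csInf_le (covVals_bddBelow E 0 hg) (single_mem E 0 g)
    simpa using this
  · have := csInf_le (covVals_bddBelow E n hg) (unit_mem E n g hn)
    push_cast at this
    exact this

lemma logb_two_pow (n : ℕ) : Real.logb 2 (2^n) = n := by
  rw [Real.logb, Real.log_pow]
  field_simp [Real.log_ne_zero_of_pos_of_ne_one]

lemma key_bound {x ε δ : ℝ} (hx0 : 0 < x) (hx : x ≤ 1/2) (hδ : δ ≤ 1) (hε : 0 < ε) :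
    x^ε * |Real.logb 2 x|^δ ≤ 1 + 1/(ε * Real.log 2) := by
  have hlog2 : 0 < Real.log 2 := Real.log_pos one_lt_two
  have hC : (0:ℝ) < 1/(ε * Real.log 2) := by positivity
  set t : ℝ := |Real.logb 2 x| with ht
  have hx1 : x ≤ 1 := by linarith
  have hxε : x^ε ≤ 1 := Real.rpow_le_one hx0.le hx1 hε.le
  have hxε0 : 0 ≤ x^ε := Real.rpow_nonneg hx0.le ε
  have hlneg : Real.logb 2 x ≤ -1 := by
    have h := Real.logb_le_logb_of_le one_lt_two hx0 hx
    rw [one_div, Real.logb_inv] at h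
    simpa using h
  have ht1 : 1 ≤ t := by
    rw [ht, abs_of_neg (by linarith : Real.logb 2 x < 0)]; linarith
  by_cases hδ0 : δ ≤ 0
  · have h1 : t^δ ≤ 1 := Real.rpow_le_one_of_one_le_of_nonpos ht1 hδ0
    have h0 : 0 ≤ t^δ := Real.rpow_nonneg (by linarith) δ
    nlinarith
  · push_neg at hδ0
    have h1 : t^δ ≤ t := by
      calc t^δ ≤ t^(1:ℝ) := Real.rpow_le_rpow_of_exponent_le ht1 hδ
        _ = t := Real.rpow_one t
    have hlogx : Real.log x = -(t * Real.log 2) := by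
      have habs : t = -(Real.logb 2 x) := abs_of_neg (by linarith : Real.logb 2 x < 0)
      rw [habs, Real.logb] at *
      field_simp
    have key : x^ε * t ≤ 1/(ε * Real.log 2) := by
      rw [Real.rpow_def_of_pos hx0, hlogx]
      rw [show -(t * Real.log 2) * ε = -(ε * Real.log 2 * t) by ring, Real.exp_neg]
      set a := ε * Real.log 2 * t with ha
      have ha0 : 0 < a := by positivity
      have hea : 0 < Real.exp a := Real.exp_pos a
      have haexp : a ≤ Real.exp a := by
        have := Real.add_one_le_exp a; linarith
      rw [le_div_iff₀ (by positivity : (0:ℝ) < ε * Real.log 2)]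
      have hinv : (Real.exp a)⁻¹ * Real.exp a = 1 := inv_mul_cancel₀ hea.ne'
      calc (Real.exp a)⁻¹ * t * (ε * Real.log 2) = (Real.exp a)⁻¹ * a := by ring
        _ ≤ (Real.exp a)⁻¹ * Real.exp a := by
            exact mul_le_mul_of_nonneg_left haexp (inv_nonneg.2 hea.le)
        _ = 1 := hinv
    have h2 : x^ε * t^δ ≤ x^ε * t := mul_le_mul_of_nonneg_left h1 hxε0
    linarith

/-- `ν_ρ^n(E)`: infimum of `Σ (Leb(I_i)/2^n)^ρ` over finite coverings of `E ∩ S_n`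
by nontrivial intervals with integer endpoints contained in `S_n`. -/
def nuCov (E : Set ℝ) (ρ : ℝ) (n : ℕ) : ℝ :=
  sInf { x : ℝ | ∃ (m : ℕ) (a b : Fin m → ℤ), 0 < m ∧ (∀ i, a i < b i) ∧
    (∀ i, Ico ((a i : ℝ)) ((b i : ℝ)) ⊆ Sann n) ∧
    (E ∩ Sann n ⊆ ⋃ i, Ico ((a i : ℝ)) ((b i : ℝ))) ∧
    x = ∑ i, ((((b i : ℝ)) - ((a i : ℝ))) / 2^n) ^ ρ }

/-- The macroscopic Hausdorff dimension of Barlow–Taylor. -/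
def DimH (E : Set ℝ) : ℝ :=
  sInf { ρ : ℝ | 0 ≤ ρ ∧ Summable (fun n => nuCov E ρ n) }

/-- The modified gauge `ν̃_ρ^n(E)`, where each covering interval `I` contributes
`(Leb(I)/2^n)^ρ · |log₂(Leb(I)/2^n)|^{1-ρ}`. -/
def nutCov (E : Set ℝ) (ρ : ℝ) (n : ℕ) : ℝ :=
  sInf { x : ℝ | ∃ (m : ℕ) (a b : Fin m → ℤ), 0 < m ∧ (∀ i, a i < b i) ∧
    (∀ i, Ico ((a i : ℝ)) ((b i : ℝ)) ⊆ Sann n) ∧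
    (E ∩ Sann n ⊆ ⋃ i, Ico ((a i : ℝ)) ((b i : ℝ))) ∧
    x = ∑ i, ((((b i : ℝ)) - ((a i : ℝ))) / 2^n) ^ ρ *
          |Real.logb 2 ((((b i : ℝ)) - ((a i : ℝ))) / 2^n)| ^ (1 - ρ) }

lemma nuCov_eq (E : Set ℝ) (ρ : ℝ) (n : ℕ) :
    nuCov E ρ n = sInf (covVals E n (fun L => (L/2^n)^ρ)) := rfl

lemma nutCov_eq (E : Set ℝ) (ρ : ℝ) (n : ℕ) :
    nutCov E ρ n = sInf (covVals E n
      (fun L => (L/2^n)^ρ * |Real.logb 2 (L/2^n)|^(1-ρ))) := rfl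

lemma g_nonneg (n : ℕ) (ρ : ℝ) : ∀ L : ℝ, 1 ≤ L → 0 ≤ (L/2^n)^ρ :=
  fun L hL => Real.rpow_nonneg (by positivity) ρ

lemma gt_nonneg (n : ℕ) (ρ : ℝ) :
    ∀ L : ℝ, 1 ≤ L → 0 ≤ (L/2^n)^ρ * |Real.logb 2 (L/2^n)|^(1-ρ) :=
  fun L hL => mul_nonneg (Real.rpow_nonneg (by positivity) ρ)
    (Real.rpow_nonneg (abs_nonneg _) _)

lemma two_pow_split (n : ℕ) (hn : n ≠ 0) : (2:ℝ)^n = 2 * 2^(n-1) := by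
  rw [← pow_succ']; congr 1; omega

lemma pow_mul_rpow (n : ℕ) (ρ : ℝ) :
    (2:ℝ)^n * ((1:ℝ)/2^n)^ρ = ((2:ℝ)^((1:ℝ)-ρ))^n := by
  rw [one_div, ← Real.rpow_natCast 2 n, ← Real.rpow_neg two_pos.le,
    ← Real.rpow_natCast ((2:ℝ)^((1:ℝ)-ρ)) n,
    ← Real.rpow_mul two_pos.le, ← Real.rpow_mul two_pos.le, ← Real.rpow_add two_pos]
  congr 1; ring

lemma nuCov_nonneg (E : Set ℝ) (ρ : ℝ) (n : ℕ) : 0 ≤ nuCov E ρ n := by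
  rw [nuCov_eq]; exact Real.sInf_nonneg (covVals_nonneg _ _ (g_nonneg n ρ))

lemma nutCov_nonneg (E : Set ℝ) (ρ : ℝ) (n : ℕ) : 0 ≤ nutCov E ρ n := by
  rw [nutCov_eq]; exact Real.sInf_nonneg (covVals_nonneg _ _ (gt_nonneg n ρ))

lemma abs_logb_one_div (n : ℕ) : |Real.logb 2 ((1:ℝ)/2^n)| = n := by
  rw [one_div, Real.logb_inv, abs_neg, logb_two_pow, abs_of_nonneg (Nat.cast_nonneg n)]

lemma summable_nu_gt_one (E : Set ℝ) {ρ : ℝ} (hρ : 1 < ρ) :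
    Summable (fun n => nuCov E ρ n) := by
  set r : ℝ := (2:ℝ)^((1:ℝ)-ρ) with hr
  have hr0 : 0 ≤ r := Real.rpow_nonneg two_pos.le _
  have hr1 : r < 1 := Real.rpow_lt_one_of_one_lt_of_neg one_lt_two (by linarith)
  refine Summable.of_nonneg_of_le (fun n => nuCov_nonneg E ρ n) (fun n => ?_)
    (summable_geometric_of_lt_one hr0 hr1)
  calc nuCov E ρ n ≤ 2^(n-1) * ((1:ℝ)/2^n)^ρ := by
        rw [nuCov_eq]; exact sInf_le_unit E n (g_nonneg n ρ)
    _ ≤ 2^n * ((1:ℝ)/2^n)^ρ := by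
        have h1 : (2:ℝ)^(n-1) ≤ 2^n := pow_le_pow_right₀ one_le_two (Nat.sub_le n 1)
        have h2 : (0:ℝ) ≤ ((1:ℝ)/2^n)^ρ := Real.rpow_nonneg (by positivity) ρ
        nlinarith
    _ = r^n := pow_mul_rpow n ρ

lemma summable_nut_gt_one (E : Set ℝ) {ρ : ℝ} (hρ : 1 < ρ) :
    Summable (fun n => nutCov E ρ n) := by
  set r : ℝ := (2:ℝ)^((1:ℝ)-ρ) with hr
  have hr0 : 0 ≤ r := Real.rpow_nonneg two_pos.le _
  have hr1 : r < 1 := Real.rpow_lt_one_of_one_lt_of_neg one_lt_two (by linarith)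
  refine Summable.of_nonneg_of_le (fun n => nutCov_nonneg E ρ n) (fun n => ?_)
    (summable_geometric_of_lt_one hr0 hr1)
  have hfac : |Real.logb 2 ((1:ℝ)/2^n)|^((1:ℝ)-ρ) ≤ 1 := by
    rw [abs_logb_one_div]
    rcases Nat.eq_zero_or_pos n with h | h
    · subst h; rw [Nat.cast_zero, Real.zero_rpow (by linarith : (1:ℝ)-ρ ≠ 0)]; norm_num
    · exact Real.rpow_le_one_of_one_le_of_nonpos (by exact_mod_cast h) (by linarith)
  calc nutCov E ρ n
      ≤ 2^(n-1) * (((1:ℝ)/2^n)^ρ * |Real.logb 2 ((1:ℝ)/2^n)|^((1:ℝ)-ρ)) := by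
        rw [nutCov_eq]; exact sInf_le_unit E n (gt_nonneg n ρ)
    _ ≤ 2^n * ((1:ℝ)/2^n)^ρ := by
        have h1 : (2:ℝ)^(n-1) ≤ 2^n := pow_le_pow_right₀ one_le_two (Nat.sub_le n 1)
        have h2 : (0:ℝ) ≤ ((1:ℝ)/2^n)^ρ := Real.rpow_nonneg (by positivity) ρ
        have e1 : (2:ℝ)^(n-1) * (((1:ℝ)/2^n)^ρ * |Real.logb 2 ((1:ℝ)/2^n)|^((1:ℝ)-ρ)) ≤
            2^(n-1) * ((1:ℝ)/2^n)^ρ :=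
          mul_le_mul_of_nonneg_left (mul_le_of_le_one_right h2 hfac) (by positivity)
        have e2 : (2:ℝ)^(n-1) * ((1:ℝ)/2^n)^ρ ≤ 2^n * ((1:ℝ)/2^n)^ρ :=
          mul_le_mul_of_nonneg_right h1 h2
        linarith
    _ = r^n := pow_mul_rpow n ρ

lemma x_le_half {L : ℝ} {n : ℕ} (hn : n ≠ 0) (hL1 : 1 ≤ L) (hL2 : L ≤ 2^(n-1)) :
    0 < L/2^n ∧ L/2^n ≤ 1/2 := by
  have hp : (0:ℝ) < 2^n := by positivity
  constructor
  · positivity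
  · rw [div_le_div_iff₀ hp two_pos, two_pow_split n hn]
    nlinarith

lemma nu_le_nut (E : Set ℝ) (ρ : ℝ) (n : ℕ) (hρ0 : 0 ≤ ρ) (hρ1 : ρ ≤ 1) (hn : n ≠ 0) :
    nuCov E ρ n ≤ nutCov E ρ n := by
  have main : sInf (covVals E n (fun L => (L/2^n)^ρ)) ≤
      1 * sInf (covVals E n (fun L => (L/2^n)^ρ * |Real.logb 2 (L/2^n)|^(1-ρ))) := by
    refine sInf_le_mul_sInf E n one_pos (g_nonneg n ρ) (fun L hL1 hL2 => ?_)
    rw [one_mul]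
    obtain ⟨hx0, hxh⟩ := x_le_half hn hL1 hL2
    have hT : 1 ≤ |Real.logb 2 (L/2^n)| := by
      have h := Real.logb_le_logb_of_le one_lt_two hx0 hxh
      rw [one_div, Real.logb_inv] at h
      have h' : Real.logb 2 (L/2^n) ≤ -1 := by simpa using h
      rw [abs_of_neg (by linarith : Real.logb 2 (L/2^n) < 0)]; linarith
    have h1 : 1 ≤ |Real.logb 2 (L/2^n)|^((1:ℝ)-ρ) := Real.one_le_rpow hT (by linarith)
    nlinarith [Real.rpow_nonneg hx0.le ρ]
  rw [nuCov_eq, nutCov_eq]; linarith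

lemma nut_le_C_nu (E : Set ℝ) (ρ ε : ℝ) (n : ℕ) (hρ0 : 0 ≤ ρ) (hε : 0 < ε) (hn : n ≠ 0) :
    nutCov E (ρ+ε) n ≤ (1 + 1/(ε * Real.log 2)) * nuCov E ρ n := by
  have hlog2 : 0 < Real.log 2 := Real.log_pos one_lt_two
  have hC : (0:ℝ) < 1 + 1/(ε * Real.log 2) := by positivity
  rw [nuCov_eq, nutCov_eq]
  refine sInf_le_mul_sInf E n hC (gt_nonneg n (ρ+ε)) (fun L hL1 hL2 => ?_)
  obtain ⟨hx0, hxh⟩ := x_le_half hn hL1 hL2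
  set x := L/2^n with hx
  have hsplit : x^(ρ+ε) = x^ρ * x^ε := Real.rpow_add hx0 ρ ε
  have hkey : x^ε * |Real.logb 2 x|^((1:ℝ)-(ρ+ε)) ≤ 1 + 1/(ε * Real.log 2) :=
    key_bound hx0 hxh (by linarith) hε
  have hxρ : 0 ≤ x^ρ := Real.rpow_nonneg hx0.le ρ
  calc x^(ρ+ε) * |Real.logb 2 x|^(1-(ρ+ε))
      = x^ρ * (x^ε * |Real.logb 2 x|^((1:ℝ)-(ρ+ε))) := by rw [hsplit]; ring
    _ ≤ x^ρ * (1 + 1/(ε * Real.log 2)) := mul_le_mul_of_nonneg_left hkey hxρ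
    _ = (1 + 1/(ε * Real.log 2)) * x^ρ := by ring

theorem modified_gauge_same_dimension (E : Set ℝ) (hE : E ⊆ Ici 0) :
    sInf { ρ : ℝ | 0 ≤ ρ ∧ Summable (fun n => nutCov E ρ n) } =
    sInf { ρ : ℝ | 0 ≤ ρ ∧ Summable (fun n => nuCov E ρ n) } := by
  set A := { ρ : ℝ | 0 ≤ ρ ∧ Summable (fun n => nutCov E ρ n) } with hA
  set B := { ρ : ℝ | 0 ≤ ρ ∧ Summable (fun n => nuCov E ρ n) } with hB
  have hmemA : ∀ ρ : ℝ, 1 < ρ → ρ ∈ A := fun ρ hρ => ⟨by linarith, summable_nut_gt_one E hρ⟩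
  have hmemB : ∀ ρ : ℝ, 1 < ρ → ρ ∈ B := fun ρ hρ => ⟨by linarith, summable_nu_gt_one E hρ⟩
  have hAne : A.Nonempty := ⟨2, hmemA 2 one_lt_two⟩
  have hBne : B.Nonempty := ⟨2, hmemB 2 one_lt_two⟩
  have hAbdd : BddBelow A := ⟨0, fun ρ hρ => hρ.1⟩
  have hBbdd : BddBelow B := ⟨0, fun ρ hρ => hρ.1⟩
  have hA1 : sInf A ≤ 1 := le_of_forall_pos_le_add fun ε hε =>
    csInf_le hAbdd (hmemA (1+ε) (by linarith))
  have hB1 : sInf B ≤ 1 := le_of_forall_pos_le_add fun ε hε =>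
    csInf_le hBbdd (hmemB (1+ε) (by linarith))
  apply le_antisymm
  · -- sInf A ≤ sInf B
    apply le_of_forall_pos_le_add
    intro ε hε
    obtain ⟨ρ, hρB, hρlt⟩ := Real.lt_sInf_add_pos hBne (half_pos hε)
    by_cases h1 : ρ ≤ 1
    · have hmem : ρ + ε/2 ∈ A := by
        refine ⟨by linarith [hρB.1], ?_⟩
        rw [← summable_nat_add_iff 1]
        refine Summable.of_nonneg_of_le (fun n => nutCov_nonneg E _ _) (fun n => ?_)
          (((summable_nat_add_iff 1).2 hρB.2).mul_left (1 + 1/((ε/2) * Real.log 2)))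
        exact nut_le_C_nu E ρ (ε/2) (n+1) hρB.1 (half_pos hε) (Nat.succ_ne_zero n)
      calc sInf A ≤ ρ + ε/2 := csInf_le hAbdd hmem
        _ ≤ sInf B + ε := by linarith
    · push_neg at h1
      linarith
  · -- sInf B ≤ sInf A
    apply le_csInf hAne
    rintro ρ ⟨hρ0, hsum⟩
    by_cases h1 : ρ ≤ 1
    · refine csInf_le hBbdd ⟨hρ0, ?_⟩
      rw [← summable_nat_add_iff 1]
      exact Summable.of_nonneg_of_le (fun n => nuCov_nonneg E _ _)
        (fun n => nu_le_nut E ρ (n+1) hρ0 h1 (Nat.succ_ne_zero n))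
        ((summable_nat_add_iff 1).2 hsum)
    · push_neg at h1
      linarith
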